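/- arXiv:2001.02945 — 3 statements merged into one kernel-verified Lean document; each statement's English description precedes it below -/
import Mathlib

section
/- Let p be an odd prime, let n ≥ 2 be an integer, and let G be a group of order 2^n · p generated by three elements ρ0, ρ1, ρ2 each satisfying ρ0^2 = ρ1^2 = ρ2^2 = 1. Then G has a non-trivial normal subgroup whose order is a power of 2. -/
/-!
Let `P` be a Sylow 2-subgroup; it has index `p`.

If the Sylow `p`-subgroup `T` is normal, let `C` be the kernel of the conjugation action of `G`
on `T`. Then `G ⧸ C` embeds in the cyclic group `Aut T` and is generated by involutions, so
`[G : C] ∣ 2` and `2 ∣ |C|` because `n ≥ 2`. As `T` is central in `C` and `[C : T]` is a power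
of 2, the Sylow 2-subgroup of `C` is normal in `C`, hence characteristic, hence normal in `G`.

If two distinct Sylow 2-subgroups meet nontrivially, take an inclusion-maximal such intersection
`D = P₁ ⊓ P₂`. Normalizers grow in 2-groups, so a Sylow 2-subgroup containing `N_G(D)` would
meet both `P₁` and `P₂` in more than `D`; hence `p ∣ |N_G(D)|`, so `G = P₁ N_G(D)` and every
conjugate of `D` lies in `P₁`: the normal core of `P₁` is nontrivial.

Otherwise the number of Sylow 2-subgroups divides `p`. If it is 1, `P` is normal. If it is `p`,
they contribute `p (2ⁿ - 1)` non-identity elements, leaving room for a single Sylow `p`-subgroup,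
which is then normal.
-/

open Subgroup

section

variable {G : Type*} [Group G]

theorem index_ker_dvd_two_of_closure_eq_top {M : Type*} [Group M] [IsCyclic M] {S : Set G}
    (hS : closure S = ⊤) (hS2 : ∀ s ∈ S, s ^ 2 = 1) (φ : G →* M) : φ.ker.index ∣ 2 := by
  let := IsCyclic.commGroup (α := M)
  have hsq : ∀ g, φ g ^ 2 = 1 := by
    have : closure S ≤ ((powMonoidHom 2).comp φ).ker :=
      (closure_le _).mpr fun s hs => by simp [← map_pow, hS2 s hs]
    rw [hS] at this
    exact fun g => this (mem_top g)
  rw [index_ker, ← IsCyclic.exponent_eq_card]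
  exact Monoid.exponent_dvd_of_forall_pow_eq_one fun ⟨_, g, rfl⟩ => Subtype.ext (hsq g)

theorem isCyclic_mulAut_of_prime_card {T : Type*} [Group T] (hT : (Nat.card T).Prime) :
    IsCyclic (MulAut T) := by
  have : Fact (Nat.card T).Prime := ⟨hT⟩
  have := isCyclic_of_prime_card (α := T) rfl
  exact isCyclic_of_surjective (IsCyclic.mulAutMulEquiv T).symm (MulEquiv.surjective _)

theorem Sylow.normal_of_card_eq_one {p : ℕ} (h : Nat.card (Sylow p G) = 1) (P : Sylow p G) :
    (P : Subgroup G).Normal :=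
  have := (Nat.card_eq_one_iff_unique.mp h).1
  P.normal_of_subsingleton

theorem dvd_card_of_not_isPGroup {q n p : ℕ} [Fact q.Prime] (hG : Nat.card G = q ^ n * p)
    (hp : p.Prime) {K : Subgroup G} (hK : ¬ IsPGroup q K) : p ∣ Nat.card K := by
  by_contra h
  have hdvd : Nat.card K ∣ q ^ n :=
    ((hp.coprime_iff_not_dvd.mpr h).symm).dvd_of_dvd_mul_right (hG ▸ card_subgroup_dvd_card K)
  obtain ⟨k, -, hk⟩ := (Nat.dvd_prime_pow Fact.out).mp hdvd
  exact hK (IsPGroup.of_card hk)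

section Finite

variable [Finite G]

theorem inf_eq_bot_of_card_eq_prime {H K : Subgroup G} {p : ℕ} (hp : p.Prime)
    (hH : Nat.card H = p) (hK : Nat.card K = p) (hne : H ≠ K) : H ⊓ K = ⊥ := by
  rcases (Nat.dvd_prime hp).mp (hH ▸ card_dvd_of_le inf_le_left : Nat.card ↥(H ⊓ K) ∣ p)
    with h | h
  · exact card_eq_one.mp h
  · have hHK : H ⊓ K = H := eq_of_le_of_card_ge inf_le_left (by rw [h, hH])
    have hKH : H ⊓ K = K := eq_of_le_of_card_ge inf_le_right (by rw [h, hK])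
    exact absurd (hHK.symm.trans hKH) hne

theorem sum_card_sub_one_le_of_pairwise_inf_eq_bot {ι : Type*} [Fintype ι] (H : ι → Subgroup G)
    (hH : Pairwise fun i j => H i ⊓ H j = ⊥) :
    ∑ i, (Nat.card (H i) - 1) ≤ Nat.card G - 1 := by
  classical
  have : Fintype G := Fintype.ofFinite G
  let E : ι → Finset G := fun i => (Finset.univ.filter (· ∈ H i)).erase 1
  have hE : ∀ i, (E i).card = Nat.card (H i) - 1 := fun i => by
    rw [Finset.card_erase_of_mem (by simp [one_mem]), Nat.card_eq_fintype_card,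
      Fintype.card_subtype]
  have hdisj : Set.PairwiseDisjoint ↑(Finset.univ : Finset ι) E := by
    intro i _ j _ hij
    rw [Function.onFun, Finset.disjoint_left]
    intro x hxi hxj
    simp only [E, Finset.mem_erase, Finset.mem_filter, Finset.mem_univ, true_and] at hxi hxj
    have : x ∈ H i ⊓ H j := ⟨hxi.2, hxj.2⟩
    rw [hH hij] at this
    exact hxi.1 this
  calc ∑ i, (Nat.card (H i) - 1) = (Finset.univ.biUnion E).card := by
        rw [Finset.card_biUnion hdisj]; simp only [hE]
    _ ≤ (Finset.univ.erase (1 : G)).card :=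
        Finset.card_le_card fun x => by simp +contextual [E]
    _ = Nat.card G - 1 := by
        rw [Finset.card_erase_of_mem (Finset.mem_univ _), Finset.card_univ,
          Nat.card_eq_fintype_card]

theorem exists_mul_eq_of_relIndex_eq_index {H K : Subgroup G}
    (h : H.relIndex K = H.index) (g : G) : ∃ x ∈ H, ∃ k ∈ K, x * k = g := by
  have hstab : MulAction.stabilizer K ((1 : G) : G ⧸ H) = H.subgroupOf K := by
    ext k
    change (k : G) • ((1 : G) : G ⧸ H) = (1 : G) ↔ _
    rw [MulAction.Quotient.smul_mk, QuotientGroup.eq, mem_subgroupOf]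
    simp
  have horbit : MulAction.orbit K ((1 : G) : G ⧸ H) = Set.univ := by
    refine Set.eq_of_subset_of_ncard_le (Set.subset_univ _) ?_
    rw [← MulAction.index_stabilizer, hstab, Set.ncard_univ, ← relIndex, h, index]
  obtain ⟨k, hk⟩ : ((g⁻¹ : G) : G ⧸ H) ∈ MulAction.orbit K ((1 : G) : G ⧸ H) :=
    horbit ▸ Set.mem_univ _
  have hkg : ((k : G)⁻¹ * g⁻¹) ∈ H := by
    change (k : G) • ((1 : G) : G ⧸ H) = (g⁻¹ : G) at hk
    rwa [MulAction.Quotient.smul_mk, smul_eq_mul, mul_one, QuotientGroup.eq] at hk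
  exact ⟨_, inv_mem hkg, _, inv_mem k.2, by group⟩

variable {q : ℕ} [Fact q.Prime]

theorem IsPGroup.lt_normalizer_inf {H P : Subgroup G} (hP : IsPGroup q P) (h : H < P) :
    H < normalizer (H : Set G) ⊓ P := by
  have := hP.isNilpotent
  have hlt : H.subgroupOf P < ⊤ :=
    lt_top_iff_ne_top.mpr fun e => h.not_ge (subgroupOf_eq_top.mp e)
  have := Group.normalizerCondition_of_isNilpotent _ hlt
  rw [← subgroupOf_normalizer_eq h.le] at this
  have := map_subtype_lt_map_subtype.mpr this
  rwa [subgroupOf_map_subtype, subgroupOf_map_subtype, inf_of_le_left h.le] at this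

namespace Sylow

theorem card_eq_of_card_eq_pow_mul (P : Sylow q G) {n m : ℕ} (hG : Nat.card G = q ^ n * m)
    (hm : ¬ q ∣ m) : Nat.card P = q ^ n := by
  have hm0 : m ≠ 0 := by rintro rfl; exact hm (dvd_zero q)
  rw [P.card_eq_multiplicity, hG,
    Nat.factorization_mul (pow_ne_zero _ (Fact.out : q.Prime).ne_zero) hm0, Finsupp.add_apply,
    Nat.factorization_eq_zero_of_not_dvd hm, add_zero, (Fact.out : q.Prime).factorization_pow,
    Finsupp.single_eq_same]

theorem index_eq_of_card_eq_pow_mul (P : Sylow q G) {n m : ℕ} (hG : Nat.card G = q ^ n * m)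
    (hm : ¬ q ∣ m) : (P : Subgroup G).index = m := by
  have := (P : Subgroup G).card_mul_index
  rw [P.card_eq_of_card_eq_pow_mul hG hm, hG] at this
  exact Nat.eq_of_mul_eq_mul_left (pow_pos (Fact.out : q.Prime).pos _) this

theorem normal_of_index_center_dvd (P : Sylow q G) {k : ℕ} (h : (center G).index ∣ q ^ k) :
    (P : Subgroup G).Normal := by
  rw [← normalizer_eq_top_iff, ← index_eq_one]
  have hcop : Nat.Coprime (q ^ k) (P : Subgroup G).index :=
    Nat.Coprime.pow_left k ((Nat.Prime.coprime_iff_not_dvd Fact.out).mpr P.not_dvd_index)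
  exact Nat.eq_one_of_dvd_coprimes hcop ((index_dvd_of_le (center_le_normalizer _)).trans h)
    (index_dvd_of_le le_normalizer)

theorem relIndex_eq_index_of_dvd_card (P : Sylow q G) {p : ℕ} (hp : p.Prime) (hqp : q ≠ p)
    (hP : (P : Subgroup G).index = p) {K : Subgroup G} (hK : p ∣ Nat.card K) :
    (P : Subgroup G).relIndex K = (P : Subgroup G).index := by
  obtain ⟨m, hm⟩ := IsPGroup.iff_card.mp (P.isPGroup'.comap_subtype (K := K))
  have hpq : ¬ p ∣ q ^ m := fun h =>
    hqp ((Nat.prime_dvd_prime_iff_eq hp Fact.out).mp (hp.dvd_of_dvd_pow h)).symm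
  have hdvd : p ∣ (P : Subgroup G).relIndex K := by
    rw [← ((P : Subgroup G).subgroupOf K).card_mul_index] at hK
    exact (hp.dvd_mul.mp (hm ▸ hK)).resolve_left hpq
  have hle : (P : Subgroup G).relIndex K ≤ (P : Subgroup G).index := by
    rw [← relIndex_top_right]
    exact relIndex_le_of_le_right le_top
      (relIndex_top_right (P : Subgroup G) ▸ index_ne_zero_of_finite)
  have hpos : 0 < (P : Subgroup G).relIndex K :=
    Nat.pos_of_dvd_of_pos (relIndex_dvd_card _ _) Nat.card_pos
  rw [hP] at hle ⊢
  exact le_antisymm hle (Nat.le_of_dvd hpos hdvd)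

theorem not_isPGroup_normalizer_inf {P₁ P₂ : Sylow q G} (hne : P₁ ≠ P₂)
    (hmax : ∀ Q₁ Q₂ : Sylow q G, Q₁ ≠ Q₂ →
      ¬ (P₁ : Subgroup G) ⊓ P₂ < (Q₁ : Subgroup G) ⊓ Q₂) :
    ¬ IsPGroup q (normalizer (((P₁ : Subgroup G) ⊓ P₂ : Subgroup G) : Set G)) := by
  set D : Subgroup G := (P₁ : Subgroup G) ⊓ P₂
  intro hN
  obtain ⟨P₃, hP₃⟩ := hN.exists_le_sylow
  have key : ∀ P : Sylow q G, D < P → P₃ = P := fun P hDP => by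
    by_contra h
    exact hmax P₃ P h ((P.isPGroup'.lt_normalizer_inf hDP).trans_le (inf_le_inf_right _ hP₃))
  have hlt : ∀ {P Q : Sylow q G}, P ≠ Q → (P : Subgroup G) ⊓ Q < P := fun {P Q} hPQ =>
    inf_le_left.lt_of_ne fun h => hPQ (ext (P.is_maximal' Q.isPGroup' (inf_eq_left.mp h)).symm)
  exact hne ((key P₁ (hlt hne)).symm.trans (key P₂ ((inf_comm _ _).trans_lt (hlt hne.symm))))

theorem normalCore_ne_bot_of_maximal_inf {n p : ℕ} (hG : Nat.card G = q ^ n * p)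
    (hp : p.Prime) (hqp : q ≠ p) {P₁ P₂ : Sylow q G} (hne : P₁ ≠ P₂)
    (hD : (P₁ : Subgroup G) ⊓ P₂ ≠ ⊥)
    (hmax : ∀ Q₁ Q₂ : Sylow q G, Q₁ ≠ Q₂ →
      ¬ (P₁ : Subgroup G) ⊓ P₂ < (Q₁ : Subgroup G) ⊓ Q₂) :
    (P₁ : Subgroup G).normalCore ≠ ⊥ := by
  set D : Subgroup G := (P₁ : Subgroup G) ⊓ P₂
  have hidx : (P₁ : Subgroup G).index = p :=
    P₁.index_eq_of_card_eq_pow_mul hG ((Nat.prime_dvd_prime_iff_eq Fact.out hp).not.mpr hqp)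
  have hrel := P₁.relIndex_eq_index_of_dvd_card hp hqp hidx
    (dvd_card_of_not_isPGroup hG hp (not_isPGroup_normalizer_inf hne hmax))
  have hDcore : D ≤ (P₁ : Subgroup G).normalCore := by
    intro d hd g
    obtain ⟨x, hx, k, hk, rfl⟩ := exists_mul_eq_of_relIndex_eq_index hrel g
    have hkd : k * d * k⁻¹ ∈ D := (mem_normalizer_iff.mp hk d).mp hd
    have e : x * k * d * (x * k)⁻¹ = x * (k * d * k⁻¹) * x⁻¹ := by group
    rw [e]
    exact mul_mem (mul_mem hx (inf_le_left (a := (P₁ : Subgroup G)) hkd)) (inv_mem hx)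
  exact fun h => hD (le_bot_iff.mp (h ▸ hDcore))

theorem exists_normalCore_ne_bot {n p : ℕ} (hG : Nat.card G = q ^ n * p) (hp : p.Prime)
    (hqp : q ≠ p)
    (h : ∃ P₁ P₂ : Sylow q G, P₁ ≠ P₂ ∧ (P₁ : Subgroup G) ⊓ P₂ ≠ ⊥) :
    ∃ P : Sylow q G, (P : Subgroup G).normalCore ≠ ⊥ := by
  obtain ⟨P₁, P₂, hne, hD⟩ := h
  let S : Set (Subgroup G) :=
    {D | ∃ Q₁ Q₂ : Sylow q G, Q₁ ≠ Q₂ ∧ (Q₁ : Subgroup G) ⊓ Q₂ = D}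
  obtain ⟨D, hle, hDmax⟩ := S.toFinite.exists_le_maximal ⟨P₁, P₂, hne, rfl⟩
  obtain ⟨Q₁, Q₂, hQ, rfl⟩ := hDmax.prop
  exact ⟨Q₁, normalCore_ne_bot_of_maximal_inf hG hp hqp hQ (ne_bot_of_le_ne_bot hD hle)
    fun R₁ R₂ hR => hDmax.not_gt ⟨R₁, R₂, hR, rfl⟩⟩

theorem card_eq_one_of_pairwise_inf_eq_bot {n p : ℕ} [Fact p.Prime] (hqp : q ≠ p)
    (hG : Nat.card G = q ^ n * p)
    (hq : Pairwise fun P₁ P₂ : Sylow q G => (P₁ : Subgroup G) ⊓ P₂ = ⊥)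
    (hnq : Nat.card (Sylow q G) = p) : Nat.card (Sylow p G) = 1 := by
  classical
  have := Fintype.ofFinite (Sylow q G)
  have := Fintype.ofFinite (Sylow p G)
  have hp : p.Prime := Fact.out
  have hcop : Nat.Coprime (q ^ n) p :=
    Nat.Coprime.pow_left n ((Nat.coprime_primes Fact.out hp).mpr hqp)
  have hcq : ∀ P : Sylow q G, Nat.card P = q ^ n := fun P =>
    P.card_eq_of_card_eq_pow_mul hG ((Nat.prime_dvd_prime_iff_eq Fact.out hp).not.mpr hqp)
  have hcp : ∀ T : Sylow p G, Nat.card T = p := fun T => by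
    simpa using T.card_eq_of_card_eq_pow_mul (n := 1) (by rw [hG, pow_one, mul_comm])
      (hp.coprime_iff_not_dvd.mp hcop.symm)
  let H : Sylow q G ⊕ Sylow p G → Subgroup G := Sum.elim (↑) (↑)
  have hH : Pairwise fun i j => H i ⊓ H j = ⊥ := by
    rintro (P₁ | T₁) (P₂ | T₂) hne
    · exact hq fun h => hne (congrArg Sum.inl h)
    · exact disjoint_iff.mp <| disjoint_of_coprime_natCard <|
        (hcq P₁).symm ▸ (hcp T₂).symm ▸ hcop
    · exact disjoint_iff.mp <| disjoint_of_coprime_natCard <|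
        (hcp T₁).symm ▸ (hcq P₂).symm ▸ hcop.symm
    · exact inf_eq_bot_of_card_eq_prime hp (hcp T₁) (hcp T₂)
        fun h => hne (congrArg Sum.inr (Sylow.ext h))
  have hsum := sum_card_sub_one_le_of_pairwise_inf_eq_bot H hH
  simp only [H, Fintype.sum_sum_type, Sum.elim_inl, Sum.elim_inr, hcq, hcp, Finset.sum_const,
    Finset.card_univ, smul_eq_mul, ← Nat.card_eq_fintype_card, hnq, hG] at hsum
  have hqn : 1 ≤ q ^ n := Nat.one_le_pow _ _ (Fact.out : q.Prime).pos
  have hsplit : q ^ n * p - 1 = p * (q ^ n - 1) + (p - 1) := by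
    zify [hqn, hp.one_le, Nat.mul_pos hqn hp.pos]
    ring
  have hp1 : 0 < p - 1 := by have := hp.two_le; omega
  have hle : Nat.card (Sylow p G) * (p - 1) ≤ 1 * (p - 1) := by omega
  exact le_antisymm (Nat.le_of_mul_le_mul_right hle hp1) Nat.card_pos

end Sylow

theorem exists_normal_isPGroup_two_of_normal_prime_card {S : Set G} (hS : closure S = ⊤)
    (hS2 : ∀ s ∈ S, s ^ 2 = 1) {n p : ℕ} (hp : p.Prime) (hn : 2 ≤ n)
    (hG : Nat.card G = 2 ^ n * p) (T : Subgroup G) [T.Normal] (hT : Nat.card T = p) :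
    ∃ K : Subgroup G, K.Normal ∧ K ≠ ⊥ ∧ IsPGroup 2 K := by
  have : Fact (Nat.Prime 2) := ⟨Nat.prime_two⟩
  have : Fact p.Prime := ⟨hp⟩
  have := isCyclic_mulAut_of_prime_card (hT ▸ hp)
  have := isCyclic_of_prime_card hT
  have hTcomm : ∀ a b : T, a * b = b * a := (IsCyclic.commGroup (α := T)).mul_comm
  set C := (MulAut.conjNormal : G →* MulAut T).ker
  have hcomm : ∀ c ∈ C, ∀ t ∈ T, c * t * c⁻¹ = t := fun c hc t ht => by
    simpa using congrArg (fun f : MulAut T => ((f ⟨t, ht⟩ : T) : G)) (MonoidHom.mem_ker.mp hc)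
  have hTC : T ≤ C := fun t ht => by
    rw [MonoidHom.mem_ker]
    ext s
    rw [MulAut.conjNormal_apply, MulAut.one_apply,
      show t * s = s * t from congrArg Subtype.val (hTcomm ⟨t, ht⟩ s), mul_inv_cancel_right]
  have hTidx : T.index = 2 ^ n := by
    have := T.card_mul_index
    rw [hT, hG, mul_comm] at this
    exact Nat.eq_of_mul_eq_mul_right hp.pos this
  have hZ : (center C).index ∣ 2 ^ n := by
    refine (index_dvd_of_le (H := T.subgroupOf C) fun t ht => ?_).trans
      (hTidx ▸ relIndex_dvd_index_of_le hTC)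
    rw [mem_center_iff]
    exact fun c => Subtype.ext (mul_inv_eq_iff_eq_mul.mp (hcomm c c.2 t (mem_subgroupOf.mp ht)))
  have h2C : 2 ∣ Nat.card C := by
    have h4 : 2 * 2 ∣ Nat.card C * C.index := by
      rw [card_mul_index, hG, ← pow_two]
      exact (pow_dvd_pow 2 hn).mul_right p
    exact Nat.dvd_of_mul_dvd_mul_right two_pos
      (h4.trans (mul_dvd_mul_left _ (index_ker_dvd_two_of_closure_eq_top hS hS2 _)))
  obtain ⟨P⟩ : Nonempty (Sylow 2 C) := inferInstance
  have := Sylow.characteristic_of_normal P (P.normal_of_index_center_dvd hZ)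
  refine ⟨(P : Subgroup C).map C.subtype, inferInstance, ?_, P.isPGroup'.map _⟩
  rw [Ne, map_eq_bot_iff_of_injective _ C.subtype_injective]
  exact P.ne_bot_of_dvd_card h2C

end Finite

end

/-- The Claim in the proof of Theorem 3.1: a group of order `2^n * p` (`p` odd prime,
`n ≥ 2`) generated by three involutions has a non-trivial normal subgroup of 2-power order. -/
theorem stmt_2 {G : Type*} [Group G] [Finite G] (p n : ℕ)
    (hp : p.Prime) (hodd : Odd p) (hn : 2 ≤ n)
    (ρ0 ρ1 ρ2 : G) (hgen : Subgroup.closure {ρ0, ρ1, ρ2} = ⊤)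
    (hcard : Nat.card G = 2 ^ n * p)
    (h0 : ρ0 ^ 2 = 1) (h1 : ρ1 ^ 2 = 1) (h2 : ρ2 ^ 2 = 1) :
    ∃ K : Subgroup G, K.Normal ∧ K ≠ ⊥ ∧ ∃ k : ℕ, Nat.card K = 2 ^ k := by
  have : Fact p.Prime := ⟨hp⟩
  have : Fact (Nat.Prime 2) := ⟨Nat.prime_two⟩
  have h2p : 2 ≠ p := fun h => (Nat.not_odd_iff_even.mpr even_two) (h ▸ hodd)
  have hp2 : ¬ 2 ∣ p := (Nat.prime_dvd_prime_iff_eq Nat.prime_two hp).not.mpr h2p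
  have h2np : ¬ p ∣ 2 ^ n := fun h => h2p ((Nat.prime_dvd_prime_iff_eq hp Nat.prime_two).mp
    (hp.dvd_of_dvd_pow h)).symm
  suffices ∃ K : Subgroup G, K.Normal ∧ K ≠ ⊥ ∧ IsPGroup 2 K by
    obtain ⟨K, hK, hne, h2K⟩ := this
    exact ⟨K, hK, hne, IsPGroup.iff_card.mp h2K⟩
  by_cases hT : ∃ T : Sylow p G, (T : Subgroup G).Normal
  · obtain ⟨T, hT⟩ := hT
    refine exists_normal_isPGroup_two_of_normal_prime_card hgen (by simp [h0, h1, h2]) hp hn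
      hcard T ?_
    simpa using T.card_eq_of_card_eq_pow_mul (n := 1) (by rw [hcard, pow_one, mul_comm]) h2np
  by_cases hP : ∃ P₁ P₂ : Sylow 2 G, P₁ ≠ P₂ ∧ (P₁ : Subgroup G) ⊓ P₂ ≠ ⊥
  · obtain ⟨P, hP⟩ := Sylow.exists_normalCore_ne_bot hcard hp h2p hP
    exact ⟨_, normalCore_normal _, hP, P.isPGroup'.to_le (normalCore_le _)⟩
  push Not at hT hP
  obtain ⟨P⟩ : Nonempty (Sylow 2 G) := inferInstance
  obtain ⟨T⟩ : Nonempty (Sylow p G) := inferInstance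
  rcases (Nat.dvd_prime hp).mp (P.index_eq_of_card_eq_pow_mul hcard hp2 ▸ P.card_dvd_index)
    with h1 | hnp
  · exact ⟨P, P.normal_of_card_eq_one h1,
      P.ne_bot_of_dvd_card (hcard ▸ (dvd_pow_self 2 (by omega)).mul_right p), P.isPGroup'⟩
  · exact absurd (T.normal_of_card_eq_one (Sylow.card_eq_one_of_pairwise_inf_eq_bot h2p hcard
      (fun P₁ P₂ h => hP P₁ P₂ h) hnp)) (hT T)
end

section
/- For an integer k ≥ 2, let L2 be the presented group on generators ρ0, ρ1, ρ2 with relation set {ρ0^2, ρ1^2, ρ2^2, (ρ0ρ1)^2, (ρ1ρ2)^k, (ρ0ρ2)^2}. Then L2 has order 4k, L2 is isomorphic to the direct product of a cyclic group of order 2 with the dihedral group of order 2k, and in L2 the images of ρ0, ρ1, ρ2, ρ0ρ1, ρ0ρ2 have order exactly 2 while the image of ρ1ρ2 has order exactly k. -/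
/-!
With `c` the generator of `C₂`, the assignment `ρ₀ ↦ (c, 1)`, `ρ₁ ↦ (1, sr 0)`,
`ρ₂ ↦ (1, sr 1)` kills the relations, so it defines `L₂ → C₂ × D_k`. Conversely `ρ₀` is an
involution commuting with `ρ₁` and `ρ₂`, and `s = ρ₁`, `t = ρ₁ρ₂` satisfy the dihedral
relations `s² = tᵏ = 1`, `sts = t⁻¹`, which gives a homomorphism back. The two maps are
mutually inverse, and the orders are read off in `C₂ × D_k`.
-/

namespace Stmt4

def r0 : FreeGroup (Fin 3) := FreeGroup.of 0
def r1 : FreeGroup (Fin 3) := FreeGroup.of 1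
def r2 : FreeGroup (Fin 3) := FreeGroup.of 2

/-- The relations of the presented group `L2` of Proposition 2.1. -/
def rels (k : ℕ) : Set (FreeGroup (Fin 3)) :=
  {r0 ^ 2, r1 ^ 2, r2 ^ 2, (r0 * r1) ^ 2, (r1 * r2) ^ k, (r0 * r2) ^ 2}

/-- The image of the `i`-th generator in `L2`. -/
def g (k : ℕ) (i : Fin 3) : PresentedGroup (rels k) := PresentedGroup.of i

section
variable {G : Type*} [Group G] {n : ℕ}

lemma inv_eq_self_of_sq_eq_one {s : G} (hs : s ^ 2 = 1) : s⁻¹ = s :=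
  inv_eq_of_mul_eq_one_right (by rwa [← sq])

lemma commute_of_sq_eq_one {x y : G} (hx : x ^ 2 = 1) (hy : y ^ 2 = 1) (hxy : (x * y) ^ 2 = 1) :
    Commute x y := by
  have h := inv_eq_self_of_sq_eq_one hxy
  rw [mul_inv_rev, inv_eq_self_of_sq_eq_one hx, inv_eq_self_of_sq_eq_one hy] at h
  exact h.symm

lemma mul_mul_mul_eq_inv_of_sq_eq_one {s u : G} (hs : s ^ 2 = 1) (hu : u ^ 2 = 1) :
    s * (s * u) * s = (s * u)⁻¹ := by
  rw [mul_inv_rev, inv_eq_self_of_sq_eq_one hs, inv_eq_self_of_sq_eq_one hu, ← mul_assoc, ← sq,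
    hs, one_mul]

lemma zpow_eq_zpow_of_intCast_eq {x : G} (hx : x ^ n = 1) {m m' : ℤ}
    (h : (m : ZMod n) = m') : x ^ m = x ^ m' :=
  zpow_eq_zpow_iff_modEq.2 <| ((ZMod.intCast_eq_intCast_iff m m' n).1 h).of_dvd <|
    Int.natCast_dvd_natCast.2 (orderOf_dvd_of_pow_eq_one hx)

-- Exponents are lifted to `ℤ` by `ZMod.cast`, so that `n = 0` (where `ZMod 0 = ℤ`) needs no
-- separate treatment.
def zmodPowHom (x : G) (hx : x ^ n = 1) : Multiplicative (ZMod n) →* G where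
  toFun i := x ^ (i.toAdd.cast : ℤ)
  map_one' := by
    rw [← zpow_zero x]
    exact zpow_eq_zpow_of_intCast_eq hx (by simp)
  map_mul' i j := by
    rw [← zpow_add]
    exact zpow_eq_zpow_of_intCast_eq hx (by simp)

lemma zmodPowHom_ofAdd_intCast {x : G} (hx : x ^ n = 1) (m : ℤ) :
    zmodPowHom x hx (.ofAdd m) = x ^ m :=
  zpow_eq_zpow_of_intCast_eq hx (by simp)

lemma zmodPowHom_ofAdd_one {x : G} (hx : x ^ n = 1) : zmodPowHom x hx (.ofAdd 1) = x := by
  simpa using zmodPowHom_ofAdd_intCast hx 1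

lemma mul_zpow_mul_eq_inv {s t : G} (hs : s ^ 2 = 1) (hst : s * t * s = t⁻¹) (m : ℤ) :
    s * t ^ m * s = (t ^ m)⁻¹ := by
  have h := conj_zpow (a := s) (b := t) (i := m)
  rwa [inv_eq_self_of_sq_eq_one hs, hst, inv_zpow, eq_comm] at h

open DihedralGroup in
def dihedralLift (s t : G) (hs : s ^ 2 = 1) (ht : t ^ n = 1) (hst : s * t * s = t⁻¹) :
    DihedralGroup n →* G where
  toFun
    | r i => zmodPowHom t ht (.ofAdd i)
    | sr i => s * zmodPowHom t ht (.ofAdd i)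
  map_one' := map_one (zmodPowHom t ht)
  map_mul' := by
    have hss : s * s = 1 := by rwa [← sq]
    have conj (i : ZMod n) :
        s * zmodPowHom t ht (.ofAdd i) * s = zmodPowHom t ht (.ofAdd (-i)) := by
      rw [ofAdd_neg, map_inv]; exact mul_zpow_mul_eq_inv hs hst _
    rintro (i | i) (j | j) <;> simp only [r_mul_r, r_mul_sr, sr_mul_r, sr_mul_sr]
    · rw [ofAdd_add, map_mul]
    · rw [sub_eq_neg_add, ofAdd_add, map_mul, ← conj]
      simp only [← mul_assoc, hss, one_mul]
    · rw [ofAdd_add, map_mul, mul_assoc]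
    · rw [sub_eq_neg_add, ofAdd_add, map_mul, ← conj]
      simp only [← mul_assoc]

section
variable {s t : G} {hs : s ^ 2 = 1} {ht : t ^ n = 1} {hst : s * t * s = t⁻¹}

@[simp]
lemma dihedralLift_r (i : ZMod n) :
    dihedralLift s t hs ht hst (.r i) = zmodPowHom t ht (.ofAdd i) :=
  rfl

@[simp]
lemma dihedralLift_sr (i : ZMod n) :
    dihedralLift s t hs ht hst (.sr i) = s * zmodPowHom t ht (.ofAdd i) :=
  rfl

end

open DihedralGroup in
lemma commute_zmodPowHom_dihedralLift {a s t : G} (ha : a ^ 2 = 1) (hs : s ^ 2 = 1)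
    (ht : t ^ n = 1) (hst : s * t * s = t⁻¹) (has : Commute a s) (hat : Commute a t)
    (x : Multiplicative (ZMod 2)) (d : DihedralGroup n) :
    Commute (zmodPowHom a ha x) (dihedralLift s t hs ht hst d) := by
  rcases d with i | i
  · exact (hat.zpow_right _).zpow_left _
  · exact (has.mul_right (hat.zpow_right _)).zpow_left _

end

open DihedralGroup

lemma g_sq (k : ℕ) (i : Fin 3) : g k i ^ 2 = 1 := by
  fin_cases i
  · exact PresentedGroup.one_of_mem (show r0 ^ 2 ∈ rels k by simp [rels])
  · exact PresentedGroup.one_of_mem (show r1 ^ 2 ∈ rels k by simp [rels])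
  · exact PresentedGroup.one_of_mem (show r2 ^ 2 ∈ rels k by simp [rels])

lemma g0_mul_g1_sq (k : ℕ) : (g k 0 * g k 1) ^ 2 = 1 :=
  PresentedGroup.one_of_mem (show (r0 * r1) ^ 2 ∈ rels k by simp [rels])

lemma g0_mul_g2_sq (k : ℕ) : (g k 0 * g k 2) ^ 2 = 1 :=
  PresentedGroup.one_of_mem (show (r0 * r2) ^ 2 ∈ rels k by simp [rels])

lemma g1_mul_g2_pow (k : ℕ) : (g k 1 * g k 2) ^ k = 1 :=
  PresentedGroup.one_of_mem (show (r1 * r2) ^ k ∈ rels k by simp [rels])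

lemma commute_g0_g1 (k : ℕ) : Commute (g k 0) (g k 1) :=
  commute_of_sq_eq_one (g_sq k 0) (g_sq k 1) (g0_mul_g1_sq k)

lemma commute_g0_g2 (k : ℕ) : Commute (g k 0) (g k 2) :=
  commute_of_sq_eq_one (g_sq k 0) (g_sq k 2) (g0_mul_g2_sq k)

def prodGen (k : ℕ) : Fin 3 → Multiplicative (ZMod 2) × DihedralGroup k :=
  ![(.ofAdd 1, 1), (1, sr 0), (1, sr 1)]

lemma prodGen_rels (k : ℕ) : ∀ w ∈ rels k, FreeGroup.lift (prodGen k) w = 1 := by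
  have h2 : Multiplicative.ofAdd (1 : ZMod 2) * .ofAdd 1 = 1 := by decide
  rintro w (rfl | rfl | rfl | rfl | rfl | rfl) <;>
    simp [r0, r1, r2, prodGen, Prod.pow_mk, h2, sq, sr_mul_sr]

def toProd (k : ℕ) : PresentedGroup (rels k) →* Multiplicative (ZMod 2) × DihedralGroup k :=
  PresentedGroup.toGroup (prodGen_rels k)

lemma toProd_g (k : ℕ) (i : Fin 3) : toProd k (g k i) = prodGen k i :=
  PresentedGroup.toGroup.of _

def ofProd (k : ℕ) : Multiplicative (ZMod 2) × DihedralGroup k →* PresentedGroup (rels k) :=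
  MonoidHom.noncommCoprod _ _ <|
    commute_zmodPowHom_dihedralLift (g_sq k 0) (g_sq k 1) (g1_mul_g2_pow k)
      (mul_mul_mul_eq_inv_of_sq_eq_one (g_sq k 1) (g_sq k 2))
      (commute_g0_g1 k) ((commute_g0_g1 k).mul_right (commute_g0_g2 k))

lemma ofProd_prodGen (k : ℕ) (i : Fin 3) : ofProd k (prodGen k i) = g k i := by
  fin_cases i <;> simp [prodGen, ofProd, zmodPowHom_ofAdd_one, ← mul_assoc, ← sq, g_sq]

lemma ofProd_comp_toProd (k : ℕ) : (ofProd k).comp (toProd k) = .id _ :=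
  PresentedGroup.ext fun i => (congrArg (ofProd k) (toProd_g k i)).trans (ofProd_prodGen k i)

lemma toProd_ofProd (k : ℕ) (p : Multiplicative (ZMod 2) × DihedralGroup k) :
    toProd k (ofProd k p) = p := by
  obtain ⟨x, d⟩ := p
  obtain ⟨m, rfl⟩ : ∃ m : ℤ, .ofAdd (m : ZMod 2) = x := ⟨(x.toAdd.cast : ℤ), by simp⟩
  rcases d with i | i <;> obtain ⟨j, rfl⟩ := ZMod.intCast_surjective i <;>
    simp [ofProd, zmodPowHom_ofAdd_intCast, toProd_g, prodGen, sr_mul_sr, ← ofAdd_zsmul]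

def equivProd (k : ℕ) : PresentedGroup (rels k) ≃* Multiplicative (ZMod 2) × DihedralGroup k :=
  (toProd k).toMulEquiv (ofProd k) (ofProd_comp_toProd k) (MonoidHom.ext (toProd_ofProd k))

lemma equivProd_g (k : ℕ) (i : Fin 3) : equivProd k (g k i) = prodGen k i :=
  toProd_g k i

theorem stmt_4_general (k : ℕ) :
    Nat.card (PresentedGroup (rels k)) = 4 * k ∧
    Nonempty (PresentedGroup (rels k) ≃* Multiplicative (ZMod 2) × DihedralGroup k) ∧
    orderOf (g k 0) = 2 ∧ orderOf (g k 1) = 2 ∧ orderOf (g k 2) = 2 ∧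
    orderOf (g k 0 * g k 1) = 2 ∧ orderOf (g k 0 * g k 2) = 2 ∧
    orderOf (g k 1 * g k 2) = k := by
  have hcard : Nat.card (Multiplicative (ZMod 2)) = 2 := by
    rw [Nat.card_congr Multiplicative.toAdd, Nat.card_zmod]
  have horder : orderOf (Multiplicative.ofAdd (1 : ZMod 2)) = 2 := by
    rw [orderOf_ofAdd_eq_addOrderOf, ZMod.addOrderOf_one]
  refine ⟨?_, ⟨equivProd k⟩, ?_⟩
  · rw [Nat.card_congr (equivProd k).toEquiv, Nat.card_prod, hcard, DihedralGroup.nat_card]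
    ring
  · simp only [← (equivProd k).orderOf_eq, map_mul, equivProd_g]
    simp [prodGen, Prod.orderOf, horder, orderOf_sr, sr_mul_sr]

/-- Proposition 2.1, group `L2`: it has order `4k`, is isomorphic to `C_2 × D_{2k}`,
and the listed exponents are the true orders. -/
theorem stmt_4 (k : ℕ) (hk : 2 ≤ k) :
    Nat.card (PresentedGroup (rels k)) = 4 * k ∧
    Nonempty (PresentedGroup (rels k) ≃* Multiplicative (ZMod 2) × DihedralGroup k) ∧
    orderOf (g k 0) = 2 ∧ orderOf (g k 1) = 2 ∧ orderOf (g k 2) = 2 ∧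
    orderOf (g k 0 * g k 1) = 2 ∧ orderOf (g k 0 * g k 2) = 2 ∧
    orderOf (g k 1 * g k 2) = k :=
  stmt_4_general k

end Stmt4
end

section
/- Let G be a group generated by elements ρ0, ρ1, ρ2 with ρ0^2 = ρ1^2 = ρ2^2 = 1 and ρ0ρ2 = ρ2ρ0, and let Λ be a group generated by elements σ0, σ1, σ2 such that the triple (σ0, σ1, σ2) satisfies the intersection property in Λ. Suppose π : G → Λ is a group homomorphism with π(ρj) = σj for j = 0, 1, 2, and suppose the restriction of π to the subgroup ⟨ρ0, ρ1⟩ is injective. Then the triple (ρ0, ρ1, ρ2) satisfies the intersection property in G. -/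
/-!
Injectivity of `π` on `⟨ρ0, ρ1⟩` lifts the intersection property of `Λ` to every pair `(I, J)`
with `I ⊆ {0, 1}` or `J ⊆ {0, 1}`, and pairs with `I ⊆ J` or `J ⊆ I` are trivial. The only other
pair is `({0, 2}, {1, 2})`. As `ρ0` and `ρ2` commute, an element of `⟨ρ0, ρ2⟩ ∩ ⟨ρ1, ρ2⟩` is
`ρ0 ^ m * ρ2 ^ n`, so `ρ0 ^ m ∈ ⟨ρ0⟩ ∩ ⟨ρ1, ρ2⟩`, which is trivial by the first case.
-/

/-- A triple `(ρ 0, ρ 1, ρ 2)` of elements of a group `G` satisfies the intersection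
property if for all subsets `I, J ⊆ {0,1,2}` the intersection of the subgroups generated
by `{ρ i : i ∈ I}` and `{ρ j : j ∈ J}` is the subgroup generated by `{ρ i : i ∈ I ∩ J}`. -/
def InterProp {G : Type*} [Group G] (ρ : Fin 3 → G) : Prop :=
  ∀ I J : Set (Fin 3),
    Subgroup.closure (ρ '' I) ⊓ Subgroup.closure (ρ '' J) =
      Subgroup.closure (ρ '' (I ∩ J))

open Subgroup Set

theorem Subgroup.inf_eq_of_injOn_of_map_inf_le {G Λ : Type*} [Group G] [Group Λ] (π : G →* Λ)
    {H K L : Subgroup G} (hL : L ≤ H ⊓ K) (hinj : InjOn π H)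
    (hmap : H.map π ⊓ K.map π ≤ L.map π) : H ⊓ K = L := by
  refine le_antisymm (fun x hx => ?_) hL
  obtain ⟨y, hyL, hyx⟩ := mem_map.mp <| hmap ⟨mem_map_of_mem π hx.1, mem_map_of_mem π hx.2⟩
  exact hinj hx.1 (hL hyL).1 hyx.symm ▸ hyL

theorem Subgroup.mem_closure_pair_of_commute {G : Type*} [Group G] {a b x : G}
    (hab : Commute a b) (hx : x ∈ closure {a, b}) : ∃ m n : ℤ, a ^ m * b ^ n = x := by
  induction hx using closure_induction with
  | mem x hx =>
    rcases hx with rfl | rfl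
    · exact ⟨1, 0, by simp⟩
    · exact ⟨0, 1, by simp⟩
  | one => exact ⟨0, 0, by simp⟩
  | mul x y _ _ hx hy =>
    obtain ⟨m, n, rfl⟩ := hx
    obtain ⟨m', n', rfl⟩ := hy
    refine ⟨m + m', n + n', ?_⟩
    rw [zpow_add, zpow_add, mul_assoc, mul_assoc, ← mul_assoc (b ^ n),
      ((hab.zpow_zpow m' n).symm).eq, mul_assoc]
  | inv x _ hx =>
    obtain ⟨m, n, rfl⟩ := hx
    exact ⟨-m, -n, by rw [mul_inv_rev, zpow_neg, zpow_neg, (hab.zpow_zpow m n).inv_inv.eq]⟩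

theorem Subgroup.closure_pair_inf_eq_zpowers_of_commute {G : Type*} [Group G] {a b : G}
    (hab : Commute a b) {K : Subgroup G} (hb : b ∈ K) (ha : zpowers a ⊓ K = ⊥) :
    closure {a, b} ⊓ K = zpowers b := by
  refine le_antisymm (fun x ⟨hxab, hxK⟩ => ?_)
    (le_inf (zpowers_le.mpr (subset_closure (mem_insert_of_mem a rfl))) (zpowers_le.mpr hb))
  obtain ⟨m, n, rfl⟩ := mem_closure_pair_of_commute hab hxab
  have ham : a ^ m ∈ zpowers a ⊓ K :=
    ⟨zpow_mem_zpowers a m, by simpa using K.mul_mem hxK (K.zpow_mem (K.inv_mem hb) n)⟩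
  rw [ha, mem_bot] at ham
  rw [ham, one_mul]
  exact zpow_mem_zpowers b n

def InterPropAt {ι G : Type*} [Group G] (ρ : ι → G) (I J : Set ι) : Prop :=
  closure (ρ '' I) ⊓ closure (ρ '' J) = closure (ρ '' (I ∩ J))

section InterPropAt

variable {ι G : Type*} [Group G] {ρ : ι → G} {I J : Set ι}

theorem InterPropAt.symm (h : InterPropAt ρ I J) : InterPropAt ρ J I := by
  rwa [InterPropAt, inf_comm, inter_comm]

theorem interPropAt_of_subset (hJI : J ⊆ I) : InterPropAt ρ I J := by
  rw [InterPropAt, inter_eq_self_of_subset_right hJI]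
  exact inf_eq_right.mpr (closure_mono (image_mono hJI))

theorem InterPropAt.of_comp {Λ : Type*} [Group Λ] {π : G →* Λ} (h : InterPropAt (π ∘ ρ) I J)
    (hinj : InjOn π (closure (ρ '' I))) : InterPropAt ρ I J := by
  refine inf_eq_of_injOn_of_map_inf_le π
    (le_inf (closure_mono (image_mono inter_subset_left))
      (closure_mono (image_mono inter_subset_right))) hinj ?_
  simp only [MonoidHom.map_closure, ← image_comp]
  exact h.le

end InterPropAt

theorem Fin.three_subsets_cases (I J : Set (Fin 3)) :
    I ⊆ {0, 1} ∨ J ⊆ {0, 1} ∨ J ⊆ I ∨ I ⊆ J ∨ (I = {0, 2} ∧ J = {1, 2}) ∨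
      (I = {1, 2} ∧ J = {0, 2}) := by
  obtain ⟨s, rfl⟩ := I.toFinite.exists_finset_coe
  obtain ⟨t, rfl⟩ := J.toFinite.exists_finset_coe
  have key : ∀ s t : Finset (Fin 3), s ⊆ {0, 1} ∨ t ⊆ {0, 1} ∨ t ⊆ s ∨ s ⊆ t ∨
      (s = {0, 2} ∧ t = {1, 2}) ∨ (s = {1, 2} ∧ t = {0, 2}) := by
    decide
  simpa only [← Finset.coe_pair, Finset.coe_subset, Finset.coe_inj] using key s t

theorem stmt_8_general {G Λ : Type*} [Group G] [Group Λ]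
    (ρ0 ρ1 ρ2 : G) (σ : Fin 3 → Λ)
    (hcomm : ρ0 * ρ2 = ρ2 * ρ0)
    (hΛ : InterProp σ)
    (π : G →* Λ) (hπ : ∀ j : Fin 3, π (![ρ0, ρ1, ρ2] j) = σ j)
    (hinj : Set.InjOn π (Subgroup.closure {ρ0, ρ1} : Subgroup G)) :
    InterProp ![ρ0, ρ1, ρ2] := by
  set ρ : Fin 3 → G := ![ρ0, ρ1, ρ2]
  have hπρ : ⇑π ∘ ρ = σ := funext hπ
  have of_subset_zero_one : ∀ I J : Set (Fin 3), I ⊆ {0, 1} → InterPropAt ρ I J := fun I J hI =>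
    InterPropAt.of_comp (hπρ ▸ hΛ I J) <|
      hinj.mono <| closure_mono <| (image_mono hI).trans_eq (image_pair ρ 0 1)
  have zero_two_one_two : InterPropAt ρ {0, 2} {1, 2} := by
    have h0 : zpowers ρ0 ⊓ closure {ρ1, ρ2} = ⊥ := by
      have h := of_subset_zero_one {0} {1, 2} (by simp)
      rwa [InterPropAt, show ({0} ∩ {1, 2} : Set (Fin 3)) = ∅ by simp, image_empty,
        Subgroup.closure_empty, image_singleton, image_pair, ← zpowers_eq_closure] at h
    rw [InterPropAt, show ({0, 2} ∩ {1, 2} : Set (Fin 3)) = {2} by ext i; fin_cases i <;> simp,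
      image_pair, image_pair, image_singleton, ← zpowers_eq_closure]
    exact closure_pair_inf_eq_zpowers_of_commute hcomm
      (subset_closure (mem_insert_of_mem ρ1 (mem_singleton ρ2))) h0
  intro I J
  rcases Fin.three_subsets_cases I J with h | h | h | h | ⟨rfl, rfl⟩ | ⟨rfl, rfl⟩
  · exact of_subset_zero_one I J h
  · exact (of_subset_zero_one J I h).symm
  · exact interPropAt_of_subset h
  · exact (interPropAt_of_subset h).symm
  · exact zero_two_one_two
  · exact zero_two_one_two.symm

/-- Proposition 2.2 (quotient criterion): if an sggi `(G, {ρ0,ρ1,ρ2})` maps onto a string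
C-group `(Λ, {σ0,σ1,σ2})` by `ρ_j ↦ σ_j`, injectively on `⟨ρ0, ρ1⟩`, then `(ρ0,ρ1,ρ2)`
satisfies the intersection property in `G`. -/
theorem stmt_8 {G Λ : Type*} [Group G] [Group Λ]
    (ρ0 ρ1 ρ2 : G) (σ : Fin 3 → Λ)
    (hgenG : Subgroup.closure {ρ0, ρ1, ρ2} = ⊤)
    (hgenΛ : Subgroup.closure (Set.range σ) = ⊤)
    (h0 : ρ0 ^ 2 = 1) (h1 : ρ1 ^ 2 = 1) (h2 : ρ2 ^ 2 = 1)
    (hcomm : ρ0 * ρ2 = ρ2 * ρ0)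
    (hΛ : InterProp σ)
    (π : G →* Λ) (hπ : ∀ j : Fin 3, π (![ρ0, ρ1, ρ2] j) = σ j)
    (hinj : Set.InjOn π (Subgroup.closure {ρ0, ρ1} : Subgroup G)) :
    InterProp ![ρ0, ρ1, ρ2] :=
  stmt_8_general ρ0 ρ1 ρ2 σ hcomm hΛ π hπ hinj
end
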